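/- Let d, k be positive natural numbers, σ > 0, ε : ℝ, f, g, y ∈ EuclideanSpace ℝ (Fin d), and π : Fin k → Equiv.Perm (Fin d). Write f⁽ⁱ⁾ = f ∘ π i and g⁽ⁱ⁾ = g ∘ π i, where (w∘π i) j = w (π i j) (the same permutation is applied to f and g). If ∑ i, Real.exp (⟪y, g⁽ⁱ⁾⟫ / σ²) ≤ Real.exp (−ε + (‖g‖² + 2·⟪f, g⟫) / (2σ²)), then ∑ i, Real.exp (−‖y − f⁽ⁱ⁾‖² / (2σ²)) ≥ Real.exp ε · ∑ i, Real.exp (−‖y − (f⁽ⁱ⁾ + g⁽ⁱ⁾)‖² / (2σ²)). -/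

import Mathlib

/-!
Expanding the square, `‖y - (f⁽ⁱ⁾ + g⁽ⁱ⁾)‖² = ‖y - f⁽ⁱ⁾‖² - 2⟪y, g⁽ⁱ⁾⟫ + ‖g‖² + 2⟪f, g⟫`, since a
common coordinate permutation preserves norms and inner products. Hence each Gaussian term of the
second mixture is the corresponding term of the first times `exp (⟪y, g⁽ⁱ⁾⟫ / σ²)`, times a
factor `exp (-(‖g‖² + 2⟪f, g⟫) / (2σ²))` independent of `i`. For nonnegative weights
`∑ aᵢ bᵢ ≤ (∑ aᵢ) (∑ bᵢ)`, and the hypothesis bounds `∑ bᵢ` by exactly what is needed.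
-/

open RealInnerProductSpace

/-- The coordinate-permuted copy of a vector: `(permVec π w) j = w (π j)`. -/
def permVec {d : ℕ} (π : Equiv.Perm (Fin d)) (w : EuclideanSpace ℝ (Fin d)) :
    EuclideanSpace ℝ (Fin d) :=
  WithLp.toLp 2 (fun j => w (π j))

lemma inner_permVec {d : ℕ} (π : Equiv.Perm (Fin d)) (u v : EuclideanSpace ℝ (Fin d)) :
    ⟪permVec π u, permVec π v⟫ = ⟪u, v⟫ := by
  simp only [PiLp.inner_apply, permVec, RCLike.inner_apply, starRingEnd_apply, star_trivial]
  exact Equiv.sum_comp π (fun j => v j * u j)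

lemma norm_permVec {d : ℕ} (π : Equiv.Perm (Fin d)) (u : EuclideanSpace ℝ (Fin d)) :
    ‖permVec π u‖ = ‖u‖ := by
  rw [norm_eq_sqrt_re_inner (𝕜 := ℝ), norm_eq_sqrt_re_inner (𝕜 := ℝ), inner_permVec]

lemma Finset.sum_mul_le_sum_mul_sum {ι R : Type*} [CommSemiring R] [PartialOrder R]
    [IsOrderedRing R] (s : Finset ι) {a b : ι → R} (ha : ∀ i ∈ s, 0 ≤ a i)
    (hb : ∀ i ∈ s, 0 ≤ b i) :
    ∑ i ∈ s, a i * b i ≤ (∑ i ∈ s, a i) * ∑ i ∈ s, b i := by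
  rw [Finset.sum_mul]
  exact Finset.sum_le_sum fun i hi =>
    mul_le_mul_of_nonneg_left (Finset.single_le_sum hb hi) (ha i hi)

lemma Real.exp_neg_norm_sub_add_sq_div {E : Type*} [NormedAddCommGroup E]
    [InnerProductSpace ℝ E] (y u v : E) (s : ℝ) :
    Real.exp (-‖y - (u + v)‖ ^ 2 / (2 * s))
      = Real.exp (-‖y - u‖ ^ 2 / (2 * s)) * Real.exp (⟪y, v⟫ / s)
        * Real.exp (-(‖v‖ ^ 2 + 2 * ⟪u, v⟫) / (2 * s)) := by
  have expand : ‖y - (u + v)‖ ^ 2 = ‖y - u‖ ^ 2 - 2 * ⟪y, v⟫ + (‖v‖ ^ 2 + 2 * ⟪u, v⟫) := by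
    rw [← sub_sub, norm_sub_sq_real, inner_sub_left]
    ring
  rw [← Real.exp_add, ← Real.exp_add, expand, ← mul_div_mul_left ⟪y, v⟫ s two_ne_zero]
  ring_nf

theorem mem_Ostar_sufficient_condition_general {d k : ℕ}
    {σ : ℝ} (ε : ℝ) (f g y : EuclideanSpace ℝ (Fin d))
    (π : Fin k → Equiv.Perm (Fin d))
    (hyp : ∑ i, Real.exp (⟪y, permVec (π i) g⟫ / σ ^ 2)
        ≤ Real.exp (-ε + (‖g‖ ^ 2 + 2 * ⟪f, g⟫) / (2 * σ ^ 2))) :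
    ∑ i, Real.exp (-‖y - permVec (π i) f‖ ^ 2 / (2 * σ ^ 2))
      ≥ Real.exp ε *
        ∑ i, Real.exp (-‖y - (permVec (π i) f + permVec (π i) g)‖ ^ 2 / (2 * σ ^ 2)) := by
  set t := (‖g‖ ^ 2 + 2 * ⟪f, g⟫) / (2 * σ ^ 2)
  set a : Fin k → ℝ := fun i => Real.exp (-‖y - permVec (π i) f‖ ^ 2 / (2 * σ ^ 2))
  set b : Fin k → ℝ := fun i => Real.exp (⟪y, permVec (π i) g⟫ / σ ^ 2)
  have factor : ∀ i, Real.exp (-‖y - (permVec (π i) f + permVec (π i) g)‖ ^ 2 / (2 * σ ^ 2))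
      = a i * b i * Real.exp (-t) := by
    intro i
    rw [Real.exp_neg_norm_sub_add_sq_div, norm_permVec, inner_permVec]
    simp only [a, b, t, neg_div]
  have products : ∑ i, a i * b i ≤ (∑ i, a i) * ∑ i, b i :=
    Finset.sum_mul_le_sum_mul_sum _ (fun i _ => (Real.exp_pos _).le)
      (fun i _ => (Real.exp_pos _).le)
  have ha : 0 ≤ ∑ i, a i := Finset.sum_nonneg fun i _ => (Real.exp_pos _).le
  rw [ge_iff_le, Finset.sum_congr rfl fun i _ => factor i]
  calc Real.exp ε * ∑ i, a i * b i * Real.exp (-t)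
      = Real.exp ε * Real.exp (-t) * ∑ i, a i * b i := by rw [← Finset.sum_mul]; ring
    _ ≤ Real.exp ε * Real.exp (-t) * ((∑ i, a i) * Real.exp (-ε + t)) := by
        gcongr
        exact products.trans (mul_le_mul_of_nonneg_left hyp ha)
    _ = ∑ i, a i := by
        rw [mul_comm, mul_assoc, ← Real.exp_add, ← Real.exp_add, show -ε + t + (ε + -t) = 0 by ring,
          Real.exp_zero, mul_one]

/-- **Sufficient condition for membership in `O*`.** If the sum of exponentiated inner products
with the permuted copies of `g` is small enough, then the shuffled mixture density at `y` for
the first dataset dominates `e^ε` times that for the second dataset. -/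
theorem mem_Ostar_sufficient_condition {d k : ℕ} (hd : 0 < d) (hk : 0 < k)
    {σ : ℝ} (hσ : 0 < σ) (ε : ℝ) (f g y : EuclideanSpace ℝ (Fin d))
    (π : Fin k → Equiv.Perm (Fin d))
    (hyp : ∑ i, Real.exp (⟪y, permVec (π i) g⟫ / σ ^ 2)
        ≤ Real.exp (-ε + (‖g‖ ^ 2 + 2 * ⟪f, g⟫) / (2 * σ ^ 2))) :
    ∑ i, Real.exp (-‖y - permVec (π i) f‖ ^ 2 / (2 * σ ^ 2))
      ≥ Real.exp ε *
        ∑ i, Real.exp (-‖y - (permVec (π i) f + permVec (π i) g)‖ ^ 2 / (2 * σ ^ 2)) :=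
  mem_Ostar_sufficient_condition_general ε f g y π hyp
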